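/- arXiv:1912.11590 — 4 statements merged into one kernel-verified Lean document; each statement's English description precedes it below -/
import Mathlib

section
/- Let X be a real Hilbert space, and let A and B be bounded linear operators on X, with B compact. Suppose there is a constant c₁ > 0 such that ⟨(A + B)x, x⟩ ≥ c₁‖x‖² for all x ∈ X, and suppose ⟨Ax, x⟩ > 0 for all x ∈ X with x ≠ 0. Then there exists a constant c₂ > 0 such that ⟨Ax, x⟩ ≥ c₂‖x‖² for all x ∈ X. (Lemma 4.1 of the paper; the paper states it for operators A, B : X → X′ into the dual space, which are identified with operators on X via the Riesz isometry, the dual pairing becoming the inner product.) -/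
open RealInnerProductSpace Filter Topology

/-!
Suppose `A` is not coercive. Then there are unit vectors `uₙ` with `⟪A uₙ, uₙ⟫ → 0`, and since `B`
is compact we may assume `B uₙ → y`. Applying the coercivity of `A + B` to `uₘ - uₙ`, and using
`⟪A (x - y), x - y⟫ ≤ 2 (⟪A x, x⟫ + ⟪A y, y⟫)` for the nonnegative form of `A`, shows that `(uₙ)` is
Cauchy. Its limit `x` is a unit vector with `⟪A x, x⟫ = 0`, contradicting strict positivity.
-/

theorem IsCompactOperator.exists_tendsto_subseq {𝕜 E F : Type*} [NontriviallyNormedField 𝕜]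
    [SeminormedAddCommGroup E] [NormedSpace 𝕜 E] [SeminormedAddCommGroup F] [NormedSpace 𝕜 F]
    {B : E →ₗ[𝕜] F} (hB : IsCompactOperator B) {u : ℕ → E} {r : ℝ} (hu : ∀ n, ‖u n‖ ≤ r) :
    ∃ y : F, ∃ φ : ℕ → ℕ, StrictMono φ ∧ Tendsto (fun n => B (u (φ n))) atTop (𝓝 y) := by
  obtain ⟨K, hK, hBK⟩ := hB.image_closedBall_subset_compact r
  have hmem : ∀ n, B (u n) ∈ K := fun n =>
    hBK ⟨u n, mem_closedBall_zero_iff.mpr (hu n), rfl⟩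
  obtain ⟨y, -, φ, hφ, hy⟩ := hK.tendsto_subseq hmem
  exact ⟨y, φ, hφ, hy⟩

section QuadraticForm

variable {X : Type*} [NormedAddCommGroup X] [InnerProductSpace ℝ X]

theorem inner_map_sub_le_of_nonneg {A : X →ₗ[ℝ] X} (hA : ∀ z, 0 ≤ ⟪A z, z⟫) (x y : X) :
    ⟪A (x - y), x - y⟫ ≤ 2 * (⟪A x, x⟫ + ⟪A y, y⟫) := by
  have parallelogram : ⟪A (x - y), x - y⟫ + ⟪A (x + y), x + y⟫ = 2 * (⟪A x, x⟫ + ⟪A y, y⟫) := by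
    simp only [map_sub, map_add, inner_sub_left, inner_sub_right, inner_add_left, inner_add_right]
    ring
  linarith [hA (x + y)]

theorem inner_map_sub_le_norm_sub (B : X →ₗ[ℝ] X) (x y z : X) :
    ⟪B (x - y), x - y⟫ ≤ (‖B x - z‖ + ‖B y - z‖) * ‖x - y‖ :=
  calc ⟪B (x - y), x - y⟫ = ⟪(B x - z) - (B y - z), x - y⟫ := by rw [map_sub, sub_sub_sub_cancel_right]
    _ ≤ ‖(B x - z) - (B y - z)‖ * ‖x - y‖ := real_inner_le_norm _ _
    _ ≤ (‖B x - z‖ + ‖B y - z‖) * ‖x - y‖ := by gcongr; exact norm_sub_le _ _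

theorem exists_seq_norm_eq_one_tendsto_inner_zero {A : X →ₗ[ℝ] X} (hA : ∀ z, 0 ≤ ⟪A z, z⟫)
    (h : ∀ c > 0, ∃ x, ⟪A x, x⟫ < c * ‖x‖ ^ 2) :
    ∃ u : ℕ → X, (∀ n, ‖u n‖ = 1) ∧ Tendsto (fun n => ⟪A (u n), u n⟫) atTop (𝓝 0) := by
  have unit : ∀ n : ℕ, ∃ u : X, ‖u‖ = 1 ∧ ⟪A u, u⟫ < 1 / (n + 1) := by
    intro n
    obtain ⟨x, hx⟩ := h (1 / (n + 1)) (by positivity)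
    have hx0 : 0 < ‖x‖ := norm_pos_iff.mpr (by rintro rfl; simp at hx)
    refine ⟨‖x‖⁻¹ • x, by simp [norm_smul, hx0.ne'], ?_⟩
    calc ⟪A (‖x‖⁻¹ • x), ‖x‖⁻¹ • x⟫ = ⟪A x, x⟫ / ‖x‖ ^ 2 := by
          rw [map_smul, inner_smul_left, inner_smul_right]; simp only [RCLike.conj_to_real]; ring
      _ < 1 / (n + 1) * ‖x‖ ^ 2 / ‖x‖ ^ 2 := by gcongr
      _ = 1 / (n + 1) := by field_simp
  choose u hu1 hu2 using unit
  exact ⟨u, hu1, squeeze_zero (fun n => hA _) (fun n => (hu2 n).le)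
    tendsto_one_div_add_atTop_nhds_zero_nat⟩

theorem cauchySeq_of_coercive_add {A B : X →ₗ[ℝ] X} {c : ℝ} (hc : 0 < c)
    (hAB : ∀ x, c * ‖x‖ ^ 2 ≤ ⟪A x, x⟫ + ⟪B x, x⟫) (hA : ∀ z, 0 ≤ ⟪A z, z⟫)
    {u : ℕ → X} (hu : ∀ n, ‖u n‖ ≤ 1) (hAu : Tendsto (fun n => ⟪A (u n), u n⟫) atTop (𝓝 0))
    {y : X} (hBu : Tendsto (fun n => B (u n)) atTop (𝓝 y)) : CauchySeq u := by
  set a := fun n => ⟪A (u n), u n⟫ + ‖B (u n) - y‖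
  have ha : Tendsto a atTop (𝓝 0) := by
    simpa using hAu.add (tendsto_sub_nhds_zero_iff.mpr hBu).norm
  have bound : ∀ m n, ‖u m - u n‖ ^ 2 ≤ 2 / c * (a m + a n) := by
    intro m n
    have hmn : ‖u m - u n‖ ≤ 2 := (norm_sub_le _ _).trans (by linarith [hu m, hu n])
    have hBmn := inner_map_sub_le_norm_sub B (u m) (u n) y
    have hBy : 0 ≤ ‖B (u m) - y‖ + ‖B (u n) - y‖ := by positivity
    rw [div_mul_eq_mul_div, le_div_iff₀' hc]
    nlinarith [hAB (u m - u n), inner_map_sub_le_of_nonneg hA (u m) (u n)]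
  have hsq : Tendsto (fun p : ℕ × ℕ => ‖u p.1 - u p.2‖ ^ 2) atTop (𝓝 0) := by
    rw [← prod_atTop_atTop_eq]
    refine squeeze_zero (fun p => by positivity) (fun p => bound p.1 p.2) ?_
    simpa using ((ha.comp tendsto_fst).add (ha.comp tendsto_snd)).const_mul (2 / c)
  rw [cauchySeq_iff_tendsto_dist_atTop_0]
  simpa [dist_eq_norm, Real.sqrt_sq (norm_nonneg _)] using hsq.sqrt

end QuadraticForm

/-- Lemma 4.1: if `A + B` is coercive with `B` compact and `A` is strictly positive,
then `A` is coercive. -/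
theorem stmt_0 {X : Type*} [NormedAddCommGroup X] [InnerProductSpace ℝ X] [CompleteSpace X]
    (A B : X →L[ℝ] X) (hB : IsCompactOperator B)
    (c₁ : ℝ) (hc₁ : 0 < c₁)
    (hAB : ∀ x : X, c₁ * ‖x‖ ^ 2 ≤ ⟪(A + B) x, x⟫)
    (hA : ∀ x : X, x ≠ 0 → 0 < ⟪A x, x⟫) :
    ∃ c₂ : ℝ, 0 < c₂ ∧ ∀ x : X, c₂ * ‖x‖ ^ 2 ≤ ⟪A x, x⟫ := by
  have hA₀ : ∀ z, 0 ≤ ⟪A z, z⟫ := fun z => by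
    rcases eq_or_ne z 0 with rfl | hz
    · simp
    · exact (hA z hz).le
  by_contra! h
  obtain ⟨u, hu1, hAu⟩ := exists_seq_norm_eq_one_tendsto_inner_zero (A := (A : X →ₗ[ℝ] X)) hA₀ h
  obtain ⟨y, φ, hφ, hBu⟩ := hB.exists_tendsto_subseq (B := (B : X →ₗ[ℝ] X)) (fun n => (hu1 n).le)
  have hAuφ := hAu.comp hφ.tendsto_atTop
  obtain ⟨x, hx⟩ := cauchySeq_tendsto_of_complete <|
    cauchySeq_of_coercive_add hc₁ (fun x => by simpa [inner_add_left] using hAB x) hA₀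
      (fun n => (hu1 (φ n)).le) hAuφ hBu
  have hx1 : ‖x‖ = 1 := tendsto_nhds_unique hx.norm (by simp [hu1])
  have hAx : ⟪A x, x⟫ = 0 := tendsto_nhds_unique (((A.continuous.tendsto x).comp hx).inner hx) hAuφ
  exact (hA x (norm_ne_zero_iff.mp (by simp [hx1]))).ne' hAx
end

section
/- Let H₁, H₂ and X be real Hilbert spaces, and let A₁ : H₁ → X and A₂ : H₂ → X be bounded linear operators satisfying A₁ ∘ A₁* = A₂ ∘ A₂*, where Aⱼ* denotes the Hilbert-space adjoint of Aⱼ. Then the ranges of A₁ and A₂ coincide: range(A₁) = range(A₂) as subsets of X. (Lemma 5.2 of the paper, quoted from Lemma 3.5 of Gebauer.) -/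
/-!
Since `‖Aⱼ* z‖² = ⟪Aⱼ Aⱼ* z, z⟫`, the map `A₂* z ↦ A₁* z` is a well-defined isometry, which
extends to the closure of `range A₂*`, intertwining `A₂` with `A₁`. Every point of `range A₂` is
the image of a point of `(ker A₂)ᗮ = closure (range A₂*)`, hence lies in `range A₁`.
-/

open Topology

theorem image_closure_range_subset_range_of_dist_eq {X M₁ M₂ Y : Type*}
    [PseudoMetricSpace M₁] [CompleteSpace M₁] [PseudoMetricSpace M₂]
    [TopologicalSpace Y] [T2Space Y]
    {S₁ : X → M₁} {S₂ : X → M₂} {B₁ : M₁ → Y} {B₂ : M₂ → Y}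
    (hB₁ : Continuous B₁) (hB₂ : Continuous B₂)
    (hdist : ∀ x y, dist (S₁ x) (S₁ y) = dist (S₂ x) (S₂ y))
    (hcomp : ∀ x, B₁ (S₁ x) = B₂ (S₂ x)) :
    B₂ '' closure (Set.range S₂) ⊆ Set.range B₁ := by
  rintro _ ⟨p, hp, rfl⟩
  obtain ⟨x, hx⟩ : ∃ x : ℕ → X, Filter.Tendsto (S₂ ∘ x) Filter.atTop (𝓝 p) := by
    obtain ⟨s, hs, hlim⟩ := mem_closure_iff_seq_limit.mp hp
    choose x hx using hs
    exact ⟨x, by simpa [Function.comp_def, hx] using hlim⟩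
  have hcauchy : CauchySeq (S₁ ∘ x) := by
    refine Metric.cauchySeq_iff.mpr fun ε hε => ?_
    obtain ⟨N, hN⟩ := Metric.cauchySeq_iff.mp hx.cauchySeq ε hε
    exact ⟨N, fun m hm n hn => (hdist _ _).trans_lt (hN m hm n hn)⟩
  obtain ⟨v, hv⟩ := cauchySeq_tendsto_of_complete hcauchy
  refine ⟨v, tendsto_nhds_unique ?_ ((hB₂.tendsto p).comp hx)⟩
  simpa [Function.comp_def, hcomp] using (hB₁.tendsto v).comp hv

namespace ContinuousLinearMap

variable {𝕜 E F G : Type*} [RCLike 𝕜]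
  [NormedAddCommGroup E] [InnerProductSpace 𝕜 E] [CompleteSpace E]
  [NormedAddCommGroup F] [InnerProductSpace 𝕜 F] [CompleteSpace F]
  [NormedAddCommGroup G] [InnerProductSpace 𝕜 G] [CompleteSpace G]

theorem range_eq_image_closure_range_adjoint (T : E →L[𝕜] F) :
    Set.range T = T '' closure (Set.range (adjoint T)) := by
  refine subset_antisymm ?_ (Set.image_subset_range _ _)
  rintro _ ⟨u, rfl⟩
  have hker : u - T.kerᗮ.starProjection u ∈ T.ker := by
    simpa only [Submodule.orthogonal_orthogonal] using T.kerᗮ.sub_starProjection_mem_orthogonal u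
  refine ⟨T.kerᗮ.starProjection u, ?_, ?_⟩
  · have hmem := T.orthogonal_ker.le (T.kerᗮ.starProjection_apply_mem u)
    rwa [← SetLike.mem_coe, Submodule.topologicalClosure_coe, LinearMap.coe_range] at hmem
  · rw [eq_comm, ← sub_eq_zero, ← map_sub]
    exact hker

theorem norm_adjoint_apply_eq_of_comp_adjoint_eq {A₁ : E →L[𝕜] G} {A₂ : F →L[𝕜] G}
    (h : A₁ ∘L adjoint A₁ = A₂ ∘L adjoint A₂) (z : G) :
    ‖adjoint A₁ z‖ = ‖adjoint A₂ z‖ := by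
  rw [← sq_eq_sq₀ (norm_nonneg _) (norm_nonneg _), apply_norm_sq_eq_inner_adjoint_left,
    apply_norm_sq_eq_inner_adjoint_left, adjoint_adjoint, adjoint_adjoint, h]

theorem range_subset_range_of_comp_adjoint_eq {A₁ : E →L[𝕜] G} {A₂ : F →L[𝕜] G}
    (h : A₁ ∘L adjoint A₁ = A₂ ∘L adjoint A₂) :
    Set.range A₂ ⊆ Set.range A₁ := by
  rw [range_eq_image_closure_range_adjoint A₂]
  refine image_closure_range_subset_range_of_dist_eq A₁.continuous A₂.continuous
    (fun x y => ?_) (fun x => congr($h x))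
  rw [dist_eq_norm, dist_eq_norm, ← map_sub, ← map_sub]
  exact norm_adjoint_apply_eq_of_comp_adjoint_eq h (x - y)

end ContinuousLinearMap

/-- Lemma 5.2 (Lemma 3.5 of Gebauer): if `A₁ ∘ A₁* = A₂ ∘ A₂*`, then the ranges of
`A₁` and `A₂` coincide. -/
theorem stmt_3 {H₁ H₂ X : Type*}
    [NormedAddCommGroup H₁] [InnerProductSpace ℝ H₁] [CompleteSpace H₁]
    [NormedAddCommGroup H₂] [InnerProductSpace ℝ H₂] [CompleteSpace H₂]
    [NormedAddCommGroup X] [InnerProductSpace ℝ X] [CompleteSpace X]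
    (A₁ : H₁ →L[ℝ] X) (A₂ : H₂ →L[ℝ] X)
    (h : A₁.comp (ContinuousLinearMap.adjoint A₁)
       = A₂.comp (ContinuousLinearMap.adjoint A₂)) :
    Set.range A₁ = Set.range A₂ :=
  (ContinuousLinearMap.range_subset_range_of_comp_adjoint_eq h.symm).antisymm
    (ContinuousLinearMap.range_subset_range_of_comp_adjoint_eq h)
end

section
/- Let H and K be real Hilbert spaces, let A : K → H be a bounded linear operator, and let F : K → K be a bounded self-adjoint operator that is coercive, i.e. there is c > 0 with ⟨Fψ, ψ⟩ ≥ c‖ψ‖² for all ψ ∈ K. Let S : H → H be any bounded self-adjoint operator with ⟨Sx, x⟩ ≥ 0 for all x ∈ H and S ∘ S = A ∘ F ∘ A*. Then range(S) = range(A) as subsets of H. (Abstract core of Lemma 5.4 (Theorem 3.6) of the paper: the range of the square root of the modified Neumann-to-Dirichlet operator Ñ = L′ℱ(L′)* coincides with the range of L′.) -/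
/-!
As `S` is self-adjoint, `‖S x‖² = ⟪S² x, x⟫ = ⟪F (A* x), A* x⟫`, which by coercivity and
boundedness of `F` lies between `c ‖A* x‖²` and `‖F‖ ‖A* x‖²`. Douglas' lemma — if
`‖B* x‖ ≤ C ‖A* x‖` for all `x` then `range B ⊆ range A`, proved by extending
`A* x ↦ ⟪u, B* x⟫` to a bounded functional (Hahn–Banach) and representing it (Riesz) —
then gives both inclusions.
-/

open RealInnerProductSpace
open scoped InnerProduct

namespace LinearMap

variable {R E F G : Type*} [Ring R] [AddCommGroup E] [AddCommGroup F] [AddCommGroup G]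
  [Module R E] [Module R F] [Module R G]

theorem exists_comp_rangeRestrict_eq_of_ker_le {T : E →ₗ[R] F} {φ : E →ₗ[R] G}
    (h : ker T ≤ ker φ) : ∃ ψ : range T →ₗ[R] G, ψ ∘ₗ T.rangeRestrict = φ :=
  ⟨(ker T).liftQ φ h ∘ₗ T.quotKerEquivRange.symm.toLinearMap, by
    ext x
    exact congrArg _ (quotKerEquivRange_symm_apply_image T x _)⟩

end LinearMap

section Factorization

variable {𝕜 E F : Type*} [RCLike 𝕜] [NormedAddCommGroup E] [NormedSpace 𝕜 E]
  [NormedAddCommGroup F] [NormedSpace 𝕜 F]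

theorem exists_strongDual_comp_eq_of_norm_le (T : E →ₗ[𝕜] F) (φ : E →ₗ[𝕜] 𝕜) (C : ℝ)
    (h : ∀ x, ‖φ x‖ ≤ C * ‖T x‖) : ∃ g : StrongDual 𝕜 F, ∀ x, g (T x) = φ x := by
  have hker : LinearMap.ker T ≤ LinearMap.ker φ := fun x hx ↦
    norm_le_zero_iff.mp (by simpa [LinearMap.mem_ker.mp hx] using h x)
  obtain ⟨ψ, hψ⟩ := LinearMap.exists_comp_rangeRestrict_eq_of_ker_le hker
  have hψ_bound : ∀ m, ‖ψ m‖ ≤ C * ‖m‖ := by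
    rintro ⟨_, x, rfl⟩
    exact (congrArg norm (LinearMap.congr_fun hψ x)).le.trans (h x)
  obtain ⟨g, hg, -⟩ := exists_extension_norm_eq _ (ψ.mkContinuous C hψ_bound)
  exact ⟨g, fun x ↦ (hg (T.rangeRestrict x)).trans (LinearMap.congr_fun hψ x)⟩

end Factorization

namespace ContinuousLinearMap

variable {𝕜 E F G : Type*} [RCLike 𝕜] [NormedAddCommGroup E] [InnerProductSpace 𝕜 E]
  [NormedAddCommGroup F] [InnerProductSpace 𝕜 F] [NormedAddCommGroup G] [InnerProductSpace 𝕜 G]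
  [CompleteSpace E] [CompleteSpace F] [CompleteSpace G]

theorem range_subset_range_of_norm_adjoint_le (A : E →L[𝕜] G) (B : F →L[𝕜] G) (C : ℝ)
    (h : ∀ x, ‖(B†) x‖ ≤ C * ‖(A†) x‖) : Set.range B ⊆ Set.range A := by
  rintro _ ⟨u, rfl⟩
  let φ : G →ₗ[𝕜] 𝕜 := (innerSL 𝕜 u).toLinearMap ∘ₗ (B†).toLinearMap
  have hφ : ∀ x, ‖φ x‖ ≤ (‖u‖ * C) * ‖(A†) x‖ := fun x ↦
    calc ‖φ x‖ ≤ ‖u‖ * ‖(B†) x‖ := norm_inner_le_norm _ _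
      _ ≤ ‖u‖ * (C * ‖(A†) x‖) := by gcongr; exact h x
      _ = (‖u‖ * C) * ‖(A†) x‖ := by ring
  obtain ⟨g, hg⟩ := exists_strongDual_comp_eq_of_norm_le (A†).toLinearMap φ _ hφ
  obtain ⟨z, rfl⟩ := (InnerProductSpace.toDual 𝕜 E).surjective g
  refine ⟨z, ext_inner_right 𝕜 fun x ↦ ?_⟩
  simpa [adjoint_inner_right, adjoint_inner_left, φ] using hg x

end ContinuousLinearMap

theorem Real.le_sqrt_mul_of_sq_le_mul_sq {a b k : ℝ} (hb : 0 ≤ b) (h : a ^ 2 ≤ k * b ^ 2) :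
    a ≤ √k * b := by
  rw [← Real.sqrt_sq hb, ← Real.sqrt_mul' k (sq_nonneg b)]
  exact Real.le_sqrt_of_sq_le h

namespace ContinuousLinearMap

variable {E F : Type*} [NormedAddCommGroup E] [InnerProductSpace ℝ E]
  [NormedAddCommGroup F] [InnerProductSpace ℝ F]

theorem real_inner_apply_self_le (T : E →L[ℝ] E) (x : E) : ⟪T x, x⟫ ≤ ‖T‖ * ‖x‖ ^ 2 :=
  calc ⟪T x, x⟫ ≤ ‖T x‖ * ‖x‖ := real_inner_le_norm _ _
    _ ≤ ‖T‖ * ‖x‖ * ‖x‖ := by gcongr; exact T.le_opNorm x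
    _ = ‖T‖ * ‖x‖ ^ 2 := by ring

variable [CompleteSpace E] [CompleteSpace F]

theorem norm_sq_apply_eq_inner_of_comp_self_eq {S : F →L[ℝ] F} (hS : ∀ x y, ⟪S x, y⟫ = ⟪x, S y⟫)
    {A : E →L[ℝ] F} {T : E →L[ℝ] E} (h : S ∘L S = A ∘L T ∘L A†) (x : F) :
    ‖S x‖ ^ 2 = ⟪T ((A†) x), (A†) x⟫ :=
  calc ‖S x‖ ^ 2 = ⟪S (S x), x⟫ := by rw [hS, real_inner_self_eq_norm_sq]
    _ = ⟪A (T ((A†) x)), x⟫ := by rw [← comp_apply, h]; rfl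
    _ = ⟪T ((A†) x), (A†) x⟫ := (adjoint_inner_right _ _ _).symm

end ContinuousLinearMap

open ContinuousLinearMap in
theorem stmt_5_general {H K : Type*}
    [NormedAddCommGroup H] [InnerProductSpace ℝ H] [CompleteSpace H]
    [NormedAddCommGroup K] [InnerProductSpace ℝ K] [CompleteSpace K]
    (A : K →L[ℝ] H)
    (F : K →L[ℝ] K)
    (c : ℝ) (hc : 0 < c)
    (hF_coercive : ∀ ψ : K, c * ‖ψ‖ ^ 2 ≤ ⟪F ψ, ψ⟫)
    (S : H →L[ℝ] H)
    (hS_sa : ∀ x y : H, ⟪S x, y⟫ = ⟪x, S y⟫)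
    (hSS : S.comp S = A.comp (F.comp (ContinuousLinearMap.adjoint A))) :
    Set.range S = Set.range A := by
  have hS_adj : S† = S := ((eq_adjoint_iff S S).mpr hS_sa).symm
  have hS_norm := norm_sq_apply_eq_inner_of_comp_self_eq hS_sa hSS
  apply subset_antisymm
  · refine range_subset_range_of_norm_adjoint_le A S √‖F‖ fun x ↦ ?_
    rw [hS_adj]
    refine Real.le_sqrt_mul_of_sq_le_mul_sq (norm_nonneg _) ?_
    exact hS_norm x ▸ F.real_inner_apply_self_le _
  · refine range_subset_range_of_norm_adjoint_le S A √c⁻¹ fun x ↦ ?_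
    rw [hS_adj]
    refine Real.le_sqrt_mul_of_sq_le_mul_sq (norm_nonneg _) ?_
    rw [inv_mul_eq_div, le_div_iff₀' hc, hS_norm]
    exact hF_coercive _

/-- Abstract core of Lemma 5.4: if `S` is a bounded self-adjoint nonnegative square root
of `A ∘ F ∘ A*` with `F` bounded self-adjoint coercive, then `range S = range A`. -/
theorem stmt_5 {H K : Type*}
    [NormedAddCommGroup H] [InnerProductSpace ℝ H] [CompleteSpace H]
    [NormedAddCommGroup K] [InnerProductSpace ℝ K] [CompleteSpace K]
    (A : K →L[ℝ] H)
    (F : K →L[ℝ] K)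
    (hF_sa : ∀ x y : K, ⟪F x, y⟫ = ⟪x, F y⟫)
    (c : ℝ) (hc : 0 < c)
    (hF_coercive : ∀ ψ : K, c * ‖ψ‖ ^ 2 ≤ ⟪F ψ, ψ⟫)
    (S : H →L[ℝ] H)
    (hS_sa : ∀ x y : H, ⟪S x, y⟫ = ⟪x, S y⟫)
    (hS_pos : ∀ x : H, 0 ≤ ⟪S x, x⟫)
    (hSS : S.comp S = A.comp (F.comp (ContinuousLinearMap.adjoint A))) :
    Set.range S = Set.range A :=
  stmt_5_general A F c hc hF_coercive S hS_sa hSS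
end

section
/- Abstract factorization-method theorem: Let H and K be real Hilbert spaces with H infinite-dimensional, let A : K → H be a compact linear operator whose adjoint A* : H → K is injective, and let F : K → K be a bounded self-adjoint coercive operator (there is c > 0 with ⟨Fψ, ψ⟩ ≥ c‖ψ‖² for all ψ ∈ K). Set N := A ∘ F ∘ A* : H → H, and suppose (ψₙ)ₙ∈ℕ is a Hilbert (orthonormal) basis of H consisting of eigenvectors of N with N ψₙ = λₙ ψₙ, λₙ > 0. Then for every g ∈ H, g belongs to the range of A if and only if the series Σₙ λₙ⁻¹ |⟨g, ψₙ⟩|² converges. (Abstract core of Theorem 5.6 of the paper, with A playing the role of L′ composed with the Riesz isometry and N the symmetrized, modified Neumann-to-Dirichlet operator Ñ.) -/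
/-!
Write `N = A F A*` and `aₙ = λₙ⁻¹ ⟪g, ψₙ⟫`. Since `A F A* ψₙ = λₙ ψₙ`, the vectors
`wₛ = A* (∑_{n ∈ s} aₙ ψₙ)` satisfy `A F wₛ = ∑_{n ∈ s} ⟪g, ψₙ⟫ ψₙ` and
`⟪F wₛ, wₛ⟫ = ∑_{n ∈ s} λₙ⁻¹ ⟪g, ψₙ⟫²`, so by coercivity the partial sums of the series
control `c ‖wₛ‖²`.
If `g = A φ`, this partial sum is also `⟪φ, wₛ⟫ ≤ ‖φ‖ ‖wₛ‖`, which bounds it by `‖φ‖² / c`.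
Conversely, if the series converges, the `wₛ` form a Cauchy net with limit `χ`, and
`A (F χ) = ∑ ⟪g, ψₙ⟫ ψₙ = g`.
-/

open RealInnerProductSpace

theorem inner_le_norm_sq_div_of_mul_norm_sq_le_inner {E : Type*} [NormedAddCommGroup E]
    [InnerProductSpace ℝ E] {φ w : E} {c : ℝ} (hc : 0 < c) (h : c * ‖w‖ ^ 2 ≤ ⟪φ, w⟫) :
    ⟪φ, w⟫ ≤ ‖φ‖ ^ 2 / c := by
  have hCS : ⟪φ, w⟫ ≤ ‖φ‖ * ‖w‖ := real_inner_le_norm φ w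
  rw [le_div_iff₀ hc]
  nlinarith [norm_nonneg w, norm_nonneg φ, sq_nonneg (‖φ‖ - c * ‖w‖)]

theorem summable_of_mul_norm_sq_sum_le {ι E : Type*} [NormedAddCommGroup E] [CompleteSpace E]
    {f : ι → E} {r : ι → ℝ} {c : ℝ} (hc : 0 < c) (hr : Summable r)
    (h : ∀ t : Finset ι, c * ‖∑ i ∈ t, f i‖ ^ 2 ≤ ∑ i ∈ t, r i) : Summable f := by
  rw [summable_iff_vanishing_norm]
  intro ε hε
  obtain ⟨s, hs⟩ := summable_iff_vanishing_norm.mp hr (c * ε ^ 2) (by positivity)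
  refine ⟨s, fun t ht => ?_⟩
  have hsq : c * ‖∑ i ∈ t, f i‖ ^ 2 < c * ε ^ 2 :=
    (h t).trans_lt ((le_abs_self _).trans_lt (hs t ht))
  exact lt_of_pow_lt_pow_left₀ 2 hε.le (lt_of_mul_lt_mul_left hsq hc.le)

theorem map_sum_inv_mul_smul {ι M 𝓕 𝕜 : Type*} [Field 𝕜] [AddCommGroup M] [Module 𝕜 M]
    [FunLike 𝓕 M M] [LinearMapClass 𝓕 𝕜 M M] {N : 𝓕} {ψ : ι → M} {lam : ι → 𝕜}
    (h_eig : ∀ n, N (ψ n) = lam n • ψ n) (h_ne : ∀ n, lam n ≠ 0) (x : ι → 𝕜) (s : Finset ι) :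
    N (∑ n ∈ s, ((lam n)⁻¹ * x n) • ψ n) = ∑ n ∈ s, x n • ψ n := by
  simp only [map_sum, map_smul, h_eig, smul_smul]
  refine Finset.sum_congr rfl fun n _ => ?_
  rw [mul_right_comm, inv_mul_cancel₀ (h_ne n), one_mul]

theorem inner_sum_inv_mul_smul {ι E : Type*} [NormedAddCommGroup E] [InnerProductSpace ℝ E]
    {ψ : ι → E} {lam : ι → ℝ} (g : E) (s : Finset ι) :
    ⟪g, ∑ n ∈ s, ((lam n)⁻¹ * ⟪g, ψ n⟫) • ψ n⟫ = ∑ n ∈ s, (lam n)⁻¹ * ⟪g, ψ n⟫ ^ 2 := by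
  simp only [inner_sum, real_inner_smul_right]
  exact Finset.sum_congr rfl fun n _ => by ring

section Factorization

variable {ι H K : Type*} [NormedAddCommGroup H] [InnerProductSpace ℝ H] [CompleteSpace H]
  [NormedAddCommGroup K] [InnerProductSpace ℝ K] [CompleteSpace K]
  {A : K →L[ℝ] H} {F : K →L[ℝ] K} {lam : ι → ℝ}

local notation "A†" => ContinuousLinearMap.adjoint A

theorem inner_apply_adjoint_sum_eq {ψ : ι → H} (hψ : Orthonormal ℝ ψ)
    (h_eig : ∀ n, (A.comp (F.comp A†)) (ψ n) = lam n • ψ n) (h_ne : ∀ n, lam n ≠ 0)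
    (g : H) (s : Finset ι) :
    ⟪F (A† (∑ n ∈ s, ((lam n)⁻¹ * ⟪g, ψ n⟫) • ψ n)), A† (∑ n ∈ s, ((lam n)⁻¹ * ⟪g, ψ n⟫) • ψ n)⟫
      = ∑ n ∈ s, (lam n)⁻¹ * ⟪g, ψ n⟫ ^ 2 := by
  have hN := map_sum_inv_mul_smul h_eig h_ne (fun n => ⟪g, ψ n⟫) s
  rw [ContinuousLinearMap.adjoint_inner_right]
  simp only [ContinuousLinearMap.comp_apply] at hN
  rw [hN, hψ.inner_sum]
  exact Finset.sum_congr rfl fun n _ => by simp only [conj_trivial]; ring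

variable {c : ℝ}

theorem summable_of_mem_range {ψ : ι → H} (hψ : Orthonormal ℝ ψ)
    (hc : 0 < c) (hF_coercive : ∀ x : K, c * ‖x‖ ^ 2 ≤ ⟪F x, x⟫)
    (h_eig : ∀ n, (A.comp (F.comp A†)) (ψ n) = lam n • ψ n) (h_pos : ∀ n, 0 < lam n)
    {g : H} (hg : g ∈ Set.range A) : Summable (fun n => (lam n)⁻¹ * ⟪g, ψ n⟫ ^ 2) := by
  obtain ⟨φ, rfl⟩ := hg
  refine summable_of_sum_le (c := ‖φ‖ ^ 2 / c)
    (fun n => mul_nonneg (inv_nonneg.mpr (h_pos n).le) (sq_nonneg _)) fun s => ?_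
  set w := A† (∑ n ∈ s, ((lam n)⁻¹ * ⟪A φ, ψ n⟫) • ψ n)
  have hφw : ⟪φ, w⟫ = ∑ n ∈ s, (lam n)⁻¹ * ⟪A φ, ψ n⟫ ^ 2 := by
    rw [ContinuousLinearMap.adjoint_inner_right, inner_sum_inv_mul_smul]
  have hFw : ⟪F w, w⟫ = ⟪φ, w⟫ :=
    (inner_apply_adjoint_sum_eq hψ h_eig (fun n => (h_pos n).ne') (A φ) s).trans hφw.symm
  exact hφw ▸ inner_le_norm_sq_div_of_mul_norm_sq_le_inner hc (hFw ▸ hF_coercive w)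

theorem mem_range_of_summable (ψ : HilbertBasis ι ℝ H)
    (hc : 0 < c) (hF_coercive : ∀ x : K, c * ‖x‖ ^ 2 ≤ ⟪F x, x⟫)
    (h_eig : ∀ n, (A.comp (F.comp A†)) (ψ n) = lam n • ψ n) (h_ne : ∀ n, lam n ≠ 0)
    {g : H} (hsum : Summable (fun n => (lam n)⁻¹ * ⟪g, ψ n⟫ ^ 2)) : g ∈ Set.range A := by
  set u : ι → K := fun n => A† (((lam n)⁻¹ * ⟪g, ψ n⟫) • ψ n)
  have hu : ∀ s : Finset ι, ∑ n ∈ s, u n = A† (∑ n ∈ s, ((lam n)⁻¹ * ⟪g, ψ n⟫) • ψ n) :=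
    fun s => (map_sum _ _ _).symm
  obtain ⟨χ, hχ⟩ : Summable u := summable_of_mul_norm_sq_sum_le hc hsum fun t => by
    rw [hu, ← inner_apply_adjoint_sum_eq ψ.orthonormal h_eig h_ne g t]
    exact hF_coercive _
  have hterm : ∀ n, A (F (u n)) = ⟪g, ψ n⟫ • ψ n := fun n => by
    simpa [u] using map_sum_inv_mul_smul h_eig h_ne (fun n => ⟪g, ψ n⟫) {n}
  have hg : HasSum (fun n => ⟪g, ψ n⟫ • ψ n) g := by
    simpa only [ψ.repr_apply_apply, real_inner_comm] using ψ.hasSum_repr g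
  refine ⟨F χ, (hχ.mapL (A.comp F)).unique ?_⟩
  simpa only [ContinuousLinearMap.comp_apply, hterm] using hg

end Factorization

theorem stmt_10_general {H K : Type*}
    [NormedAddCommGroup H] [InnerProductSpace ℝ H] [CompleteSpace H]
    [NormedAddCommGroup K] [InnerProductSpace ℝ K] [CompleteSpace K]
    (A : K →L[ℝ] H)
    (F : K →L[ℝ] K)
    (c : ℝ) (hc : 0 < c)
    (hF_coercive : ∀ ψ : K, c * ‖ψ‖ ^ 2 ≤ ⟪F ψ, ψ⟫)
    (ψ : HilbertBasis ℕ ℝ H) (lam : ℕ → ℝ)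
    (h_eig : ∀ n : ℕ, (A.comp (F.comp (ContinuousLinearMap.adjoint A))) (ψ n) = lam n • ψ n)
    (h_pos : ∀ n : ℕ, 0 < lam n) :
    ∀ g : H, g ∈ Set.range A ↔ Summable (fun n : ℕ => (lam n)⁻¹ * ⟪g, ψ n⟫ ^ 2) := fun _ =>
  ⟨summable_of_mem_range ψ.orthonormal hc hF_coercive h_eig h_pos,
    mem_range_of_summable ψ hc hF_coercive h_eig fun n => (h_pos n).ne'⟩

/-- Abstract factorization-method theorem (abstract core of Theorem 5.6 of the paper):
for `N = A ∘ F ∘ A*` with `A` compact, `A*` injective and `F` self-adjoint coercive,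
`g ∈ range A` iff `∑ λₙ⁻¹ |⟨g, ψₙ⟩|²` converges, where `(λₙ, ψₙ)` is an eigensystem
of `N`. -/
theorem stmt_10 {H K : Type*}
    [NormedAddCommGroup H] [InnerProductSpace ℝ H] [CompleteSpace H]
    [NormedAddCommGroup K] [InnerProductSpace ℝ K] [CompleteSpace K]
    (hH : ¬ FiniteDimensional ℝ H)
    (A : K →L[ℝ] H)
    (hA_compact : IsCompactOperator A)
    (hA_inj : Function.Injective (ContinuousLinearMap.adjoint A))
    (F : K →L[ℝ] K)
    (hF_sa : ∀ x y : K, ⟪F x, y⟫ = ⟪x, F y⟫)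
    (c : ℝ) (hc : 0 < c)
    (hF_coercive : ∀ ψ : K, c * ‖ψ‖ ^ 2 ≤ ⟪F ψ, ψ⟫)
    (ψ : HilbertBasis ℕ ℝ H) (lam : ℕ → ℝ)
    (h_eig : ∀ n : ℕ, (A.comp (F.comp (ContinuousLinearMap.adjoint A))) (ψ n) = lam n • ψ n)
    (h_pos : ∀ n : ℕ, 0 < lam n) :
    ∀ g : H, g ∈ Set.range A ↔ Summable (fun n : ℕ => (lam n)⁻¹ * ⟪g, ψ n⟫ ^ 2) :=
  stmt_10_general A F c hc hF_coercive ψ lam h_eig h_pos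
end
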